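/- arXiv:2405.02970 — 2 statements merged into one kernel-verified Lean document; each statement's English description precedes it below -/
import Mathlib

section
/- Let l be a prime with l - 1 > 18, and let G be a finite group with a normal subgroup R ≤ (F_l^×)^2 (the diagonal torus of PGL_3(F_l)) on which a subgroup U ≤ S_3 containing a 3-cycle acts by permuting coordinates, with G/R ≅ U; then G cannot surject onto ℤ/(l-1)ℤ, since such a surjection would require the coinvariants of R under the 3-cycle together with U to map onto ℤ/(l-1)ℤ, whereas the 3-cycle coinvariants of the diagonal torus of PGL_3 have order dividing 3 and |U| ≤ 6. -/
/-- The diagonal embedding `F_l^× → (F_l^×)³`. -/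
def diagHom (l : ℕ) : (ZMod l)ˣ →* (Fin 3 → (ZMod l)ˣ) where
  toFun a := fun _ => a
  map_one' := rfl
  map_mul' _ _ := rfl

/-- The diagonal torus of `PGL₃(F_l)`: `(F_l^×)³` modulo scalars. -/
abbrev Torus (l : ℕ) := (Fin 3 → (ZMod l)ˣ) ⧸ (diagHom l).range

/-- Permutation of coordinates on `(F_l^×)³`. -/
def permHom (l : ℕ) (σ : Equiv.Perm (Fin 3)) :
    (Fin 3 → (ZMod l)ˣ) →* (Fin 3 → (ZMod l)ˣ) where
  toFun f := fun i => f (σ⁻¹ i)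
  map_one' := rfl
  map_mul' _ _ := rfl

/-- The induced permutation action of `S₃` on the diagonal torus of `PGL₃(F_l)`. -/
def permT (l : ℕ) (σ : Equiv.Perm (Fin 3)) : Torus l →* Torus l :=
  QuotientGroup.map _ _ (permHom l σ) (by rintro x ⟨a, rfl⟩; exact ⟨a, rfl⟩)

lemma threecycle_pointwise {τ : Equiv.Perm (Fin 3)} (hτ : τ.IsThreeCycle)
    {M : Type*} [CommMonoid M] (x : Fin 3 → M) (i : Fin 3) :
    x i * x (τ i) * x (τ (τ i)) = ∏ j, x j := by
  have hsupp : τ.support = Finset.univ :=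
    Finset.eq_univ_of_card _ (by rw [hτ.card_support]; simp)
  have hfix : ∀ j, τ j ≠ j := fun j =>
    Equiv.Perm.mem_support.mp (hsupp ▸ Finset.mem_univ j)
  have hord : τ ^ 3 = 1 := by
    have := pow_orderOf_eq_one τ
    rwa [hτ.orderOf] at this
  have h3 : ∀ j, τ (τ (τ j)) = j := by
    intro j
    have : (τ ^ 3) j = j := by rw [hord]; rfl
    simpa [pow_succ, Equiv.Perm.mul_apply] using this
  have hττ : ∀ j, τ (τ j) ≠ j := by
    intro j h
    have := congrArg τ h
    rw [h3] at this
    exact hfix j this.symm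
  have h1 : τ i ≠ τ (τ i) := fun h => (hfix (τ i)) h.symm
  have h2 : i ≠ τ i := fun h => hfix i h.symm
  have h2' : i ≠ τ (τ i) := fun h => hττ i h.symm
  have huniv : ({i, τ i, τ (τ i)} : Finset (Fin 3)) = Finset.univ := by
    apply Finset.eq_univ_of_card
    rw [Finset.card_insert_of_notMem (by simp [h2, h2']),
      Finset.card_insert_of_notMem (by simp [h1]), Finset.card_singleton]
    simp
  rw [← huniv, Finset.prod_insert (by simp [h2, h2']),
    Finset.prod_insert (by simp [h1]), Finset.prod_singleton, mul_assoc]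

lemma torus_key (l : ℕ) (σ : Equiv.Perm (Fin 3)) (hσ : σ.IsThreeCycle) (t : Torus l) :
    t * permT l σ t * permT l σ (permT l σ t) = 1 := by
  induction t using QuotientGroup.induction_on with
  | _ x =>
    have hmk : ∀ y : Fin 3 → (ZMod l)ˣ,
        permT l σ (QuotientGroup.mk y) = QuotientGroup.mk (permHom l σ y) := fun y => rfl
    rw [hmk, hmk]
    show QuotientGroup.mk (x * permHom l σ x * permHom l σ (permHom l σ x)) = 1
    rw [QuotientGroup.eq_one_iff]
    refine ⟨∏ j, x j, funext fun i => ?_⟩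
    show (∏ j, x j) = x i * x (σ⁻¹ i) * x (σ⁻¹ (σ⁻¹ i))
    exact (threecycle_pointwise hσ.inv x i).symm

/-- A group `G` with a normal subgroup `R` contained in the diagonal torus of `PGL₃(F_l)`
and quotient `U ≤ S₃` containing a `3`-cycle, where `U` acts on `R` by permutation of
coordinates, cannot surject onto `ℤ/(l-1)ℤ` for a prime `l > 19`. -/
theorem stmt8 (l : ℕ) (hl : l.Prime) (hl19 : 19 < l)
    (G : Type*) [Group G] (R : Subgroup G) (hR : R.Normal)
    (ι : R →* Torus l) (hι : Function.Injective ι)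
    (q : (G ⧸ R) →* Equiv.Perm (Fin 3)) (hq : Function.Injective q)
    (h3 : ∃ σ ∈ q.range, Equiv.Perm.IsThreeCycle σ)
    (hcompat : ∀ (g : G) (r : R),
      ι ⟨g * r * g⁻¹, hR.conj_mem r r.2 g⟩ = permT l (q (QuotientGroup.mk g)) (ι r)) :
    ¬ ∃ f : G →* Multiplicative (ZMod (l - 1)), Function.Surjective f := by
  rintro ⟨f, hf⟩
  obtain ⟨σ, ⟨gbar, hgbar⟩, hσ⟩ := h3
  obtain ⟨g, rfl⟩ := QuotientGroup.mk_surjective gbar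
  -- every r : R satisfies f r ^ 3 = 1
  have key : ∀ r : R, f (r : G) ^ 3 = 1 := by
    intro r
    set r₁ : R := ⟨g * r * g⁻¹, hR.conj_mem r r.2 g⟩ with hr₁
    set r₂ : R := ⟨g * r₁ * g⁻¹, hR.conj_mem r₁ r₁.2 g⟩ with hr₂
    have e1 : ι r₁ = permT l σ (ι r) := by rw [hr₁, hcompat, hgbar]
    have e2 : ι r₂ = permT l σ (permT l σ (ι r)) := by rw [hr₂, hcompat, hgbar, e1]
    have hprod : r * r₁ * r₂ = 1 := by
      apply hι
      rw [map_mul, map_mul, map_one, e1, e2]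
      exact torus_key l σ hσ (ι r)
    have hprodG : (r : G) * (g * r * g⁻¹) * (g * (g * r * g⁻¹) * g⁻¹) = 1 := by
      have := congrArg (Subtype.val) hprod
      simpa [hr₁, hr₂] using this
    have hconj : ∀ a b : G, f (a * b * a⁻¹) = f b := by
      intro a b
      rw [map_mul, map_mul, map_inv, mul_comm (f a) (f b), mul_assoc, mul_inv_cancel, mul_one]
    have hfr : f ((r : G)) * f (g * (r : G) * g⁻¹) * f (g * (g * (r : G) * g⁻¹) * g⁻¹) = 1 := by
      rw [← map_mul, ← map_mul, hprodG, map_one]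
    rw [hconj g (g * (r : G) * g⁻¹)] at hfr
    rw [hconj g (r : G)] at hfr
    have h33 : (3 : ℕ) = 2 + 1 := rfl
    rw [h33, pow_succ, sq]
    exact hfr
  -- counting
  haveI : NeZero (l - 1) := ⟨by omega⟩
  set A : Subgroup (Multiplicative (ZMod (l - 1))) := R.map f with hA
  haveI : A.Normal := Subgroup.normal_of_comm A
  haveI : Finite (G ⧸ R) := Finite.of_injective q hq
  have hcardM : Nat.card (Multiplicative (ZMod (l - 1))) = l - 1 :=
    (Nat.card_congr Multiplicative.toAdd).trans (Nat.card_zmod _)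
  -- card A ≤ 3
  have hAle : Nat.card A ≤ 3 := by
    obtain ⟨a, ha⟩ := IsCyclic.exists_generator (α := A)
    have h3a : a ^ 3 = 1 := by
      obtain ⟨x, hx, hxa⟩ := a.2
      have : ((a : Multiplicative (ZMod (l - 1)))) ^ 3 = 1 := by rw [← hxa]; exact key ⟨x, hx⟩
      exact Subtype.ext (by simpa using this)
    have : Nat.card A = orderOf a := (orderOf_eq_card_of_forall_mem_zpowers ha).symm
    rw [this]
    exact Nat.le_of_dvd (by norm_num) (orderOf_dvd_of_pow_eq_one h3a)
  -- surjection G⧸R → M⧸A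
  have hQle : Nat.card (Multiplicative (ZMod (l - 1)) ⧸ A) ≤ 6 := by
    have hRle : R ≤ A.comap f := fun x hx => Subgroup.mem_map_of_mem f hx
    have hsurj : Function.Surjective (QuotientGroup.map R A f hRle) := by
      intro y
      obtain ⟨m, rfl⟩ := QuotientGroup.mk_surjective y
      obtain ⟨g', rfl⟩ := hf m
      exact ⟨QuotientGroup.mk g', rfl⟩
    have h1 : Nat.card (Multiplicative (ZMod (l - 1)) ⧸ A) ≤ Nat.card (G ⧸ R) := Nat.card_le_card_of_surjective _ hsurj
    have h2 : Nat.card (G ⧸ R) ≤ Nat.card (Equiv.Perm (Fin 3)) :=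
      Nat.card_le_card_of_injective q hq
    have h3 : Nat.card (Equiv.Perm (Fin 3)) = 6 := by
      rw [Nat.card_eq_fintype_card]; decide
    omega
  have hM : Nat.card (Multiplicative (ZMod (l - 1))) = Nat.card (Multiplicative (ZMod (l - 1)) ⧸ A) * Nat.card A :=
    Subgroup.card_eq_card_quotient_mul_card_subgroup A
  have : l - 1 ≤ 18 := by
    rw [hcardM] at hM
    nlinarith [Nat.card_pos (α := Multiplicative (ZMod (l - 1)) ⧸ A), Nat.card_pos (α := A)]
  omega
end

section
/- Let ρ, ρ' be two semisimple finite-dimensional representations of a group G over a field of characteristic zero. If tr ρ(g) = tr ρ'(g) for all g in G, then ρ ≅ ρ'. -/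
open LinearMap Module

namespace BN

variable {k : Type*} [Field k] {B : Type*} [Ring B] [Algebra k B]

/-- The action of `b : B` as a `k`-linear endomorphism of a `B`-module. -/
def act (k : Type*) [Field k] {B : Type*} [Ring B] [Algebra k B] (M : Type*) [AddCommGroup M]
    [Module k M] [Module B M] [IsScalarTower k B M] (b : B) : M →ₗ[k] M where
  toFun x := b • x
  map_add' := smul_add b
  map_smul' c x := by
    simp only [RingHom.id_apply]
    rw [← algebraMap_smul B c x, ← mul_smul, ← Algebra.commutes c b, mul_smul,
      algebraMap_smul]

@[simp] lemma act_apply (M : Type*) [AddCommGroup M] [Module k M] [Module B M]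
    [IsScalarTower k B M] (b : B) (x : M) : act k M b x = b • x := rfl

/-- For any simple module `S` over a semisimple ring, there is an idempotent `e` detecting
occurrences of `S` in other modules. -/
lemma detector [IsSemisimpleRing B] (S : Type*) [AddCommGroup S] [Module B S]
    [IsSimpleModule B S] :
    ∃ e : B, IsIdempotentElem e ∧
      (∀ (X : Type*) [AddCommGroup X] [Module B X] (ι : S →ₗ[B] X),
        Function.Injective ι → ∃ x : X, e • x ≠ 0) ∧
      (∀ (X : Type*) [AddCommGroup X] [Module B X] (x : X), e • x ≠ 0 →
        ∃ f : S →ₗ[B] X, Function.Injective f) := by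
  haveI : Nontrivial S := IsSimpleModule.nontrivial B S
  obtain ⟨s, hs⟩ := exists_ne (0 : S)
  set φ := LinearMap.toSpanSingleton B S s with hφdef
  have hφ : Function.Surjective φ := IsSimpleModule.toSpanSingleton_surjective B hs
  obtain ⟨I, hI⟩ := exists_isCompl (LinearMap.ker φ)
  let ψ : ↥I ≃ₗ[B] S :=
    (Submodule.quotientEquivOfIsCompl _ I hI).symm.trans (φ.quotKerEquivOfSurjective hφ)
  haveI : IsSimpleModule B ↥I := IsSimpleModule.congr ψ
  obtain ⟨e, he, hIe⟩ := IsSemisimpleRing.ideal_eq_span_idempotent I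
  have heI : e ∈ I := hIe ▸ Ideal.subset_span rfl
  have he0 : e ≠ 0 := by
    rintro rfl
    have hbot : I = ⊥ := by rw [hIe, Ideal.span_singleton_eq_bot]
    haveI := IsSimpleModule.nontrivial B ↥I
    rw [hbot] at this
    exact not_nontrivial _ this
  have hsmul : e • (⟨e, heI⟩ : ↥I) = ⟨e, heI⟩ := by
    ext
    simpa using he.eq
  refine ⟨e, he, ?_, ?_⟩
  · intro X _ _ ι hι
    refine ⟨ι (ψ ⟨e, heI⟩), ?_⟩
    have : e • ι (ψ ⟨e, heI⟩) = ι (ψ ⟨e, heI⟩) := by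
      rw [← map_smul, ← map_smul, hsmul]
    rw [this]
    have hne : (⟨e, heI⟩ : ↥I) ≠ 0 := fun hh => he0 (congrArg Subtype.val hh)
    have hψ : ψ ⟨e, heI⟩ ≠ 0 := fun hh => hne (ψ.injective (by simpa using hh))
    exact fun h0 => hψ (hι (by rw [h0, map_zero]))
  · intro X _ _ x hx
    let f0 : ↥I →ₗ[B] X :=
      { toFun := fun y => (y : B) • x
        map_add' := fun y z => by simp [add_smul]
        map_smul' := fun b y => by simp [mul_smul] }
    have hf0 : f0 ≠ 0 := by
      intro h
      apply hx
      have : f0 ⟨e, heI⟩ = 0 := by rw [h]; rfl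
      simpa [f0] using this
    have hinj : Function.Injective f0 := injective_of_ne_zero hf0
    exact ⟨f0.comp ψ.symm.toLinearMap, hinj.comp ψ.symm.injective⟩

lemma trace_act_ne_zero_iff [CharZero k] {M : Type*} [AddCommGroup M] [Module k M] [Module B M]
    [IsScalarTower k B M] [FiniteDimensional k M] {e : B} (he : IsIdempotentElem e) :
    trace k M (act k M e) ≠ 0 ↔ ∃ x : M, e • x ≠ 0 := by
  have hproj : IsProj (range (act k M e)) (act k M e) := by
    refine ⟨fun x => mem_range_self _ x, ?_⟩
    rintro x ⟨y, rfl⟩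
    show e • (e • y) = e • y
    rw [← mul_smul, he]
  rw [hproj.trace]
  constructor
  · intro h
    by_contra hc
    push_neg at hc
    have : act k M e = 0 := by ext x; simpa using hc x
    apply h
    rw [Nat.cast_eq_zero, Submodule.finrank_eq_zero, LinearMap.range_eq_bot]
    exact this
  · rintro ⟨x, hx⟩ h
    rw [Nat.cast_eq_zero, Submodule.finrank_eq_zero, LinearMap.range_eq_bot] at h
    exact hx (by simpa using LinearMap.congr_fun h x)

lemma trace_isCompl {M : Type*} [AddCommGroup M] [Module k M] [Module B M]
    [IsScalarTower k B M] [FiniteDimensional k M] {p q : Submodule B M} (h : IsCompl p q)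
    (b : B) :
    trace k M (act k M b) = trace k ↥p (act k ↥p b) + trace k ↥q (act k ↥q b) := by
  haveI : FiniteDimensional k ↥p :=
    inferInstanceAs (FiniteDimensional k ↥(p.restrictScalars k))
  haveI : FiniteDimensional k ↥q :=
    inferInstanceAs (FiniteDimensional k ↥(q.restrictScalars k))
  let E : (↥p × ↥q) ≃ₗ[B] M := Submodule.prodEquivOfIsCompl p q h
  let Ek : (↥p × ↥q) ≃ₗ[k] M := E.restrictScalars k
  have key : act k M b = Ek.conj ((act k ↥p b).prodMap (act k ↥q b)) := by
    ext x
    simp only [LinearEquiv.conj_apply, coe_comp, Function.comp_apply, LinearEquiv.coe_coe,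
      act_apply]
    have h1 : ((act k ↥p b).prodMap (act k ↥q b)) (Ek.symm x) = b • (Ek.symm x) := rfl
    rw [h1]
    show b • x = E (b • E.symm x)
    rw [map_smul, LinearEquiv.apply_symm_apply]
  rw [key, trace_conj', trace_prodMap']

lemma trace_congr {M N : Type*} [AddCommGroup M] [Module k M] [Module B M]
    [IsScalarTower k B M] [AddCommGroup N] [Module k N] [Module B N] [IsScalarTower k B N]
    (g : M ≃ₗ[B] N) (b : B) :
    trace k M (act k M b) = trace k N (act k N b) := by
  rw [← trace_conj' (act k M b) (g.restrictScalars k)]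
  congr 1
  ext x
  simp only [LinearEquiv.conj_apply, coe_comp, Function.comp_apply, LinearEquiv.coe_coe,
    act_apply]
  show g (b • (g.symm x)) = b • x
  rw [map_smul, LinearEquiv.apply_symm_apply]

universe u v

lemma key [CharZero k] [IsSemisimpleRing B] (n : ℕ) :
    ∀ (M : Type u) (N : Type v) [AddCommGroup M] [Module k M] [Module B M] [IsScalarTower k B M]
      [FiniteDimensional k M] [AddCommGroup N] [Module k N] [Module B N] [IsScalarTower k B N]
      [FiniteDimensional k N],
      finrank k M = n →
      (∀ b : B, trace k M (act k M b) = trace k N (act k N b)) →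
      Nonempty (M ≃ₗ[B] N) := by
  induction n using Nat.strong_induction_on with
  | _ n IH =>
  intro M N _ _ _ _ _ _ _ _ _ _ hn htr
  rcases subsingleton_or_nontrivial M with hM | hM
  · have hNsub : Subsingleton N := by
      by_contra hns
      haveI : Nontrivial N := not_subsingleton_iff_nontrivial.mp hns
      obtain ⟨S', hS'⟩ := IsSemisimpleModule.exists_simple_submodule B N
      haveI := hS'
      obtain ⟨e, he, h1, h2⟩ := detector (B := B) ↥S'
      have _h2 := h2 N
      obtain ⟨x, hx⟩ := h1 N S'.subtype (Submodule.injective_subtype S')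
      have hNtr : trace k N (act k N e) ≠ 0 := (trace_act_ne_zero_iff he).mpr ⟨x, hx⟩
      have hMz : trace k M (act k M e) = 0 := by
        rw [Subsingleton.elim (act k M e) 0, map_zero]
      exact hNtr (by rw [← htr e, hMz])
    exact ⟨LinearEquiv.ofSubsingleton M N⟩
  · obtain ⟨S, hS⟩ := IsSemisimpleModule.exists_simple_submodule B M
    haveI := hS
    obtain ⟨e, he, h1, h2⟩ := detector (B := B) ↥S
    obtain ⟨x, hx⟩ := h1 M S.subtype (Submodule.injective_subtype S)
    have hM0 : trace k M (act k M e) ≠ 0 := (trace_act_ne_zero_iff he).mpr ⟨x, hx⟩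
    have hN0 : ∃ y : N, e • y ≠ 0 := (trace_act_ne_zero_iff he).mp (htr e ▸ hM0)
    obtain ⟨y, hy⟩ := hN0
    obtain ⟨f, hf⟩ := h2 N y hy
    obtain ⟨M', hM'⟩ := exists_isCompl S
    obtain ⟨N', hN'⟩ := exists_isCompl (LinearMap.range f)
    haveI : IsSimpleModule B ↥(LinearMap.range f) :=
      IsSimpleModule.congr (LinearEquiv.ofInjective f hf).symm
    haveI : FiniteDimensional k ↥S :=
      inferInstanceAs (FiniteDimensional k ↥(S.restrictScalars k))
    haveI : FiniteDimensional k ↥M' :=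
      inferInstanceAs (FiniteDimensional k ↥(M'.restrictScalars k))
    haveI : FiniteDimensional k ↥N' :=
      inferInstanceAs (FiniteDimensional k ↥(N'.restrictScalars k))
    haveI : FiniteDimensional k ↥(LinearMap.range f) :=
      inferInstanceAs (FiniteDimensional k ↥((LinearMap.range f).restrictScalars k))
    have hMeq : finrank k ↥S + finrank k ↥M' = n := by
      rw [← hn]
      rw [← ((Submodule.prodEquivOfIsCompl S M' hM').restrictScalars k).finrank_eq,
        finrank_prod]
    haveI : Nontrivial ↥S := IsSimpleModule.nontrivial B ↥S
    have hSpos : 0 < finrank k ↥S := finrank_pos (R := k) (M := ↥S)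
    have hlt : finrank k ↥M' < n := by omega
    have htr' : ∀ b : B, trace k ↥M' (act k ↥M' b) = trace k ↥N' (act k ↥N' b) := by
      intro b
      have hM2 := trace_isCompl (k := k) hM' b
      have hN2 := trace_isCompl (k := k) hN' b
      have hSS' : trace k ↥S (act k ↥S b)
          = trace k ↥(LinearMap.range f) (act k ↥(LinearMap.range f) b) :=
        trace_congr (LinearEquiv.ofInjective f hf) b
      have h3 : trace k ↥S (act k ↥S b) + trace k ↥M' (act k ↥M' b)
          = trace k ↥S (act k ↥S b) + trace k ↥N' (act k ↥N' b) := by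
        rw [← hM2, htr b, hN2, ← hSS']
      exact add_left_cancel h3
    obtain ⟨g⟩ := IH (finrank k ↥M') hlt ↥M' ↥N' rfl htr'
    exact ⟨((Submodule.prodEquivOfIsCompl S M' hM').symm.trans
      (((LinearEquiv.ofInjective f hf).prodCongr g).trans
        (Submodule.prodEquivOfIsCompl _ N' hN')))⟩

end BN

lemma BN.pi_ss {R : Type*} [Ring R] {M : Type*} [AddCommGroup M] [Module R M]
    [IsSemisimpleModule R M] (n : ℕ) : IsSemisimpleModule R (Fin n → M) := by
  classical
  refine isSemisimpleModule_of_isSemisimpleModule_submodule'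
    (p := fun i : Fin n => LinearMap.range (LinearMap.single R (fun _ : Fin n => M) i))
    (fun i => IsSemisimpleModule.range _) ?_
  simp_rw [LinearMap.range_eq_map, Submodule.iSup_map_single, Submodule.pi_top]

lemma BN.prod_ss {R M N : Type*} [Ring R] [AddCommGroup M] [Module R M] [AddCommGroup N]
    [Module R N] [IsSemisimpleModule R M] [IsSemisimpleModule R N] :
    IsSemisimpleModule R (M × N) := by
  rw [← Submodule.topEquiv.isSemisimpleModule_iff_of_bijective (LinearEquiv.bijective _),
    ← LinearMap.sup_range_inl_inr]
  exact .sup (.range _) (.range _)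

set_option maxHeartbeats 2000000 in
set_option synthInstance.maxHeartbeats 400000 in
/-- Brauer–Nesbitt: two semisimple finite-dimensional representations of a group `G`
over a field of characteristic zero with equal trace functions are isomorphic. -/
theorem stmt11 (k : Type*) [Field k] [CharZero k] (G : Type*) [Group G]
    (V W : Type*) [AddCommGroup V] [Module k V] [FiniteDimensional k V]
    [AddCommGroup W] [Module k W] [FiniteDimensional k W]
    (ρ : Representation k G V) (ρ' : Representation k G W)
    (hV : IsSemisimpleModule (MonoidAlgebra k G) ρ.asModule)
    (hW : IsSemisimpleModule (MonoidAlgebra k G) ρ'.asModule)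
    (htr : ∀ g : G, LinearMap.trace k V (ρ g) = LinearMap.trace k W (ρ' g)) :
    Nonempty (ρ.asModule ≃ₗ[MonoidAlgebra k G] ρ'.asModule) := by
  classical
  haveI := hV
  haveI := hW
  set A := MonoidAlgebra k G with hA
  -- scalar tower instances
  haveI tV : IsScalarTower k A ρ.asModule := by
    constructor
    intro c a x
    rw [Algebra.smul_def, mul_smul]
    show ρ.asAlgebraHom (algebraMap k A c) (a • x) = c • (a • x)
    rw [AlgHom.commutes]
    rfl
  haveI tW : IsScalarTower k A ρ'.asModule := by
    constructor
    intro c a x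
    rw [Algebra.smul_def, mul_smul]
    show ρ'.asAlgebraHom (algebraMap k A c) (a • x) = c • (a • x)
    rw [AlgHom.commutes]
    rfl
  haveI fdM : FiniteDimensional k ρ.asModule := inferInstanceAs (FiniteDimensional k V)
  haveI fdN : FiniteDimensional k ρ'.asModule := inferInstanceAs (FiniteDimensional k W)
  -- the image algebra
  let π : A →ₐ[k] (Module.End k ρ.asModule × Module.End k ρ'.asModule) :=
    (Algebra.lsmul k k ρ.asModule).prod (Algebra.lsmul k k ρ'.asModule)
  let Bq := π.range
  letI mBM : Module Bq ρ.asModule :=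
    Module.compHom _ ((RingHom.fst _ _).comp Bq.val.toRingHom)
  letI mBN : Module Bq ρ'.asModule :=
    Module.compHom _ ((RingHom.snd _ _).comp Bq.val.toRingHom)
  have smulBM : ∀ (b : Bq) (x : ρ.asModule), b • x = (b : Module.End k ρ.asModule × Module.End k ρ'.asModule).1 x := fun _ _ => rfl
  have smulBN : ∀ (b : Bq) (x : ρ'.asModule), b • x = (b : Module.End k ρ.asModule × Module.End k ρ'.asModule).2 x := fun _ _ => rfl
  letI tBM : IsScalarTower k Bq ρ.asModule := by
    constructor
    intro c b x
    show ((c • b : Bq) : Module.End k ρ.asModule × Module.End k ρ'.asModule).1 x = c • ((b : Module.End k ρ.asModule × Module.End k ρ'.asModule).1 x)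
    rfl
  letI tBN : IsScalarTower k Bq ρ'.asModule := by
    constructor
    intro c b x
    show ((c • b : Bq) : Module.End k ρ.asModule × Module.End k ρ'.asModule).2 x = c • ((b : Module.End k ρ.asModule × Module.End k ρ'.asModule).2 x)
    rfl
  let σ : A →+* Bq := π.rangeRestrict.toRingHom
  have hσ : Function.Surjective σ := AlgHom.rangeRestrict_surjective π
  haveI : RingHomSurjective σ := ⟨hσ⟩
  -- transfer semisimplicity of the modules
  let lM : ρ.asModule →ₛₗ[σ] ρ.asModule :=
    { toFun := fun x => x, map_add' := fun _ _ => rfl, map_smul' := fun a x => rfl }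
  let lN : ρ'.asModule →ₛₗ[σ] ρ'.asModule :=
    { toFun := fun x => x, map_add' := fun _ _ => rfl, map_smul' := fun a x => rfl }
  haveI ssBM : IsSemisimpleModule Bq ρ.asModule :=
    (lM.isSemisimpleModule_iff_of_bijective Function.bijective_id).mp hV
  haveI ssBN : IsSemisimpleModule Bq ρ'.asModule :=
    (lN.isSemisimpleModule_iff_of_bijective Function.bijective_id).mp hW
  -- Bq is a semisimple ring
  obtain ⟨n, v, hv⟩ := Module.Finite.exists_fin (R := k) (M := ρ.asModule)
  obtain ⟨m, w, hw⟩ := Module.Finite.exists_fin (R := k) (M := ρ'.asModule)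
  let X := (Fin n → ρ.asModule) × (Fin m → ρ'.asModule)
  haveI := BN.pi_ss (R := A) (M := ρ.asModule) n
  haveI := BN.pi_ss (R := A) (M := ρ'.asModule) m
  haveI ssAX : IsSemisimpleModule A X := BN.prod_ss (M := Fin n → ρ.asModule)
    (N := Fin m → ρ'.asModule) (R := A)
  haveI ssBX : IsSemisimpleModule Bq X := by
    let lX : X →ₛₗ[σ] X :=
      { toFun := fun x => x, map_add' := fun _ _ => rfl, map_smul' := fun a x => rfl }
    exact (lX.isSemisimpleModule_iff_of_bijective Function.bijective_id).mp ssAX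
  let Φ : Bq →ₗ[Bq] X :=
    { toFun := fun b => (fun i => b • v i, fun j => b • w j)
      map_add' := fun b c => rfl
      map_smul' := fun b c => rfl }
  have hΦ0 : ∀ b : Bq, Φ b = 0 → b = 0 := by
    intro b hb
    have h1 : (b : Module.End k ρ.asModule × Module.End k ρ'.asModule).1 = 0 := by
      apply LinearMap.ext_on hv
      rintro x ⟨i, rfl⟩
      have := congrArg (fun z : X => z.1 i) hb
      simpa [smulBM, Φ] using this
    have h2 : (b : Module.End k ρ.asModule × Module.End k ρ'.asModule).2 = 0 := by
      apply LinearMap.ext_on hw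
      rintro x ⟨j, rfl⟩
      have := congrArg (fun z : X => z.2 j) hb
      simpa [smulBN, Φ] using this
    have : (b : Module.End k ρ.asModule × Module.End k ρ'.asModule) = 0 := Prod.ext h1 h2
    exact Subtype.ext this
  letI rEV : Ring (Module.End k ρ.asModule) := Module.End.instRing
  letI rEW : Ring (Module.End k ρ'.asModule) := Module.End.instRing
  have hΦinj : Function.Injective Φ := by
    intro b c h
    have := hΦ0 (b - c) (by rw [map_sub, h, sub_self])
    rwa [sub_eq_zero] at this
  haveI ssSub : IsSemisimpleModule Bq ↥(LinearMap.range Φ) :=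
    IsSemisimpleModule.submodule (m := LinearMap.range Φ)
  haveI ssRing : IsSemisimpleRing Bq :=
    IsSemisimpleModule.congr (M := ↥(LinearMap.range Φ)) (LinearEquiv.ofInjective Φ hΦinj)
  -- traces
  let eV : ρ.asModule ≃ₗ[k] V := { ρ.asModuleEquiv with map_smul' := fun c x => rfl }
  let eW : ρ'.asModule ≃ₗ[k] W := { ρ'.asModuleEquiv with map_smul' := fun c x => rfl }
  have hsingleV : ∀ (g : G) (r : k),
      LinearMap.trace k ρ.asModule ((Algebra.lsmul k (A := A) k ρ.asModule) (MonoidAlgebra.single g r))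
        = r * LinearMap.trace k V (ρ g) := by
    intro g r
    have h1 : eV.conj ((Algebra.lsmul k (A := A) k ρ.asModule) (MonoidAlgebra.single g r))
        = r • ρ g := by
      ext x
      simp only [LinearEquiv.conj_apply, LinearMap.coe_comp, Function.comp_apply,
        LinearEquiv.coe_coe]
      show ρ.asAlgebraHom (MonoidAlgebra.single g r) x = (r • ρ g) x
      rw [Representation.asAlgebraHom_single]
    rw [← trace_conj' _ eV, h1, map_smul, smul_eq_mul]
  have hsingleW : ∀ (g : G) (r : k),
      LinearMap.trace k ρ'.asModule ((Algebra.lsmul k (A := A) k ρ'.asModule) (MonoidAlgebra.single g r))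
        = r * LinearMap.trace k W (ρ' g) := by
    intro g r
    have h1 : eW.conj ((Algebra.lsmul k (A := A) k ρ'.asModule) (MonoidAlgebra.single g r))
        = r • ρ' g := by
      ext x
      simp only [LinearEquiv.conj_apply, LinearMap.coe_comp, Function.comp_apply,
        LinearEquiv.coe_coe]
      show ρ'.asAlgebraHom (MonoidAlgebra.single g r) x = (r • ρ' g) x
      rw [Representation.asAlgebraHom_single]
    rw [← trace_conj' _ eW, h1, map_smul, smul_eq_mul]
  have keyT : ∀ a : A,
      LinearMap.trace k ρ.asModule (BN.act k ρ.asModule a)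
        = LinearMap.trace k ρ'.asModule (BN.act k ρ'.asModule a) := by
    have hext : (LinearMap.trace k ρ.asModule).comp (Algebra.lsmul k (A := A) k ρ.asModule).toLinearMap
        = (LinearMap.trace k ρ'.asModule).comp (Algebra.lsmul k (A := A) k ρ'.asModule).toLinearMap := by
      refine MonoidAlgebra.lhom_ext' (S := k) (M := G) (R := k) (N := k) fun g => ?_
      apply LinearMap.ext
      intro r
      simp only [LinearMap.coe_comp, Function.comp_apply, AlgHom.toLinearMap_apply,
        MonoidAlgebra.lsingle_apply]
      rw [show (MonoidAlgebra.single g r : A) = MonoidAlgebra.single g r from rfl]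
      rw [hsingleV, hsingleW, htr g]
    intro a
    have h := LinearMap.congr_fun hext a
    exact h
  have htrB : ∀ b : Bq,
      LinearMap.trace k ρ.asModule (BN.act k ρ.asModule b)
        = LinearMap.trace k ρ'.asModule (BN.act k ρ'.asModule b) := by
    intro b
    obtain ⟨a, ha⟩ := b.2
    have h1 : BN.act k ρ.asModule b = BN.act k ρ.asModule a := by
      ext x
      show (b : Module.End k ρ.asModule × Module.End k ρ'.asModule).1 x = a • x
      rw [← ha]
      rfl
    have h2 : BN.act k ρ'.asModule b = BN.act k ρ'.asModule a := by
      ext x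
      show (b : Module.End k ρ.asModule × Module.End k ρ'.asModule).2 x = a • x
      rw [← ha]
      rfl
    rw [h1, h2]
    exact keyT a
  obtain ⟨g⟩ := BN.key (k := k) (B := Bq) (finrank k ρ.asModule)
    ρ.asModule ρ'.asModule rfl htrB
  refine ⟨{ toFun := g, invFun := g.symm, left_inv := g.left_inv, right_inv := g.right_inv,
            map_add' := g.map_add, map_smul' := fun a x => ?_ }⟩
  have h1 : (a • x : ρ.asModule) = (σ a) • x := rfl
  have h2 : ((σ a) • (g x) : ρ'.asModule) = a • (g x) := rfl
  have h3 := map_smul g (σ a) x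
  show g (a • x) = a • g x
  rw [h1, h3, h2]
end
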